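/- arXiv:1610.02637 — 3 statements merged into one kernel-verified Lean document; each statement's English description precedes it below -/
import Mathlib

section
/- Let (X, μ) be a measure space, let Φ : ℝ → ℝ be nondecreasing, and let h₁, h₂, z₁, z₂ : X → ℝ be measurable functions with h₁ ≤ h₂ μ-a.e. Assume that the functions h₁·(Φ∘z₁), h₂·(Φ∘z₂), h₁·(Φ∘min(z₁,z₂)) and h₂·(Φ∘max(z₁,z₂)) are all μ-integrable. Then ∫_X ( h₁(x) Φ(z₁(x)) + h₂(x) Φ(z₂(x)) ) dμ(x) ≤ ∫_X ( h₁(x) Φ(min(z₁(x),z₂(x))) + h₂(x) Φ(max(z₁(x),z₂(x))) ) dμ(x). -/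
open MeasureTheory

theorem Monotone.mul_add_mul_le_mul_min_add_mul_max {α R : Type*} [LinearOrder α] [CommRing R]
    [LinearOrder R] [IsStrictOrderedRing R] {Φ : α → R} (hΦ : Monotone Φ) {a b : R} (hab : a ≤ b)
    (u v : α) : a * Φ u + b * Φ v ≤ a * Φ (min u v) + b * Φ (max u v) := by
  rcases le_total u v with huv | hvu
  · rw [min_eq_left huv, max_eq_right huv]
  · rw [min_eq_right hvu, max_eq_left hvu]
    -- the right side exceeds the left by `(b - a) * (Φ u - Φ v)`
    nlinarith [mul_nonneg (sub_nonneg.mpr hab) (sub_nonneg.mpr (hΦ hvu))]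

theorem stmt_0_general {X : Type*} [MeasurableSpace X] (μ : Measure X)
    (Φ : ℝ → ℝ) (hΦ : Monotone Φ)
    (h₁ h₂ z₁ z₂ : X → ℝ)
    (hle : ∀ᵐ x ∂μ, h₁ x ≤ h₂ x)
    (i₁ : Integrable (fun x => h₁ x * Φ (z₁ x)) μ)
    (i₂ : Integrable (fun x => h₂ x * Φ (z₂ x)) μ)
    (i₃ : Integrable (fun x => h₁ x * Φ (min (z₁ x) (z₂ x))) μ)
    (i₄ : Integrable (fun x => h₂ x * Φ (max (z₁ x) (z₂ x))) μ) :
    ∫ x, (h₁ x * Φ (z₁ x) + h₂ x * Φ (z₂ x)) ∂μ ≤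
      ∫ x, (h₁ x * Φ (min (z₁ x) (z₂ x)) + h₂ x * Φ (max (z₁ x) (z₂ x))) ∂μ :=
  integral_mono_ae (i₁.add i₂) (i₃.add i₄) <| hle.mono fun x hx =>
    hΦ.mul_add_mul_le_mul_min_add_mul_max hx (z₁ x) (z₂ x)

/-- **Rearrangement inequality (3.3).** For a nondecreasing `Φ : ℝ → ℝ` and measurable
functions `h₁ ≤ h₂` a.e., with all four products integrable,
`∫ (h₁ Φ(z₁) + h₂ Φ(z₂)) ≤ ∫ (h₁ Φ(min z₁ z₂) + h₂ Φ(max z₁ z₂))`. -/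
theorem stmt_0 {X : Type*} [MeasurableSpace X] (μ : Measure X)
    (Φ : ℝ → ℝ) (hΦ : Monotone Φ)
    (h₁ h₂ z₁ z₂ : X → ℝ)
    (hh₁ : Measurable h₁) (hh₂ : Measurable h₂)
    (hz₁ : Measurable z₁) (hz₂ : Measurable z₂)
    (hle : ∀ᵐ x ∂μ, h₁ x ≤ h₂ x)
    (i₁ : Integrable (fun x => h₁ x * Φ (z₁ x)) μ)
    (i₂ : Integrable (fun x => h₂ x * Φ (z₂ x)) μ)
    (i₃ : Integrable (fun x => h₁ x * Φ (min (z₁ x) (z₂ x))) μ)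
    (i₄ : Integrable (fun x => h₂ x * Φ (max (z₁ x) (z₂ x))) μ) :
    ∫ x, (h₁ x * Φ (z₁ x) + h₂ x * Φ (z₂ x)) ∂μ ≤
      ∫ x, (h₁ x * Φ (min (z₁ x) (z₂ x)) + h₂ x * Φ (max (z₁ x) (z₂ x))) ∂μ :=
  stmt_0_general μ Φ hΦ h₁ h₂ z₁ z₂ hle i₁ i₂ i₃ i₄
end

section
/- Let f : ℝ → ℝ be defined by f(θ) = 2 + cos θ · log((1 − cos θ)/(1 + cos θ)). Then for every θ ∈ (0, π) the function f is twice differentiable at θ and satisfies sin θ · f''(θ) + cos θ · f'(θ) + 2 sin θ · f(θ) = 0 (equivalently, (sin θ · f'(θ))' + 2 sin θ · f(θ) = 0), and moreover f'(π/2) = 0. -/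
open Real

/-!
Write `L θ = log ((1 - cos θ) / (1 + cos θ))`. Away from the zeros of `sin`, `L' = 2 / sin`, so
`f = 2 + cos · L` has `f' = -sin · L + 2 cos / sin`, whence `sin · f' = 2 cos - sin² · L` and
`(sin · f')' = -2 sin (2 + cos · L) = -2 sin · f`.
-/

noncomputable def coneProfile (θ : ℝ) : ℝ :=
  2 + cos θ * log ((1 - cos θ) / (1 + cos θ))

lemma one_sub_cos_ne_zero_of_sin_ne_zero {θ : ℝ} (h : sin θ ≠ 0) : 1 - cos θ ≠ 0 := by
  rw [Ne, sin_eq_zero_iff_cos_eq] at h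
  intro hc
  exact h (Or.inl (by linarith))

lemma one_add_cos_ne_zero_of_sin_ne_zero {θ : ℝ} (h : sin θ ≠ 0) : 1 + cos θ ≠ 0 := by
  rw [Ne, sin_eq_zero_iff_cos_eq] at h
  intro hc
  exact h (Or.inr (by linarith))

lemma hasDerivAt_log_one_sub_cos_div_one_add_cos {θ : ℝ} (h : sin θ ≠ 0) :
    HasDerivAt (fun x => log ((1 - cos x) / (1 + cos x))) (2 / sin θ) θ := by
  have h₁ := one_sub_cos_ne_zero_of_sin_ne_zero h
  have h₂ := one_add_cos_ne_zero_of_sin_ne_zero h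
  have hnum : HasDerivAt (fun x => 1 - cos x) (sin θ) θ := by
    simpa using (hasDerivAt_cos θ).const_sub 1
  have hden : HasDerivAt (fun x => 1 + cos x) (-sin θ) θ := (hasDerivAt_cos θ).const_add 1
  refine ((hnum.fun_div hden h₂).log (div_ne_zero h₁ h₂)).congr_deriv ?_
  field_simp
  linear_combination 2 * sin_sq_add_cos_sq θ

lemma hasDerivAt_coneProfile {θ : ℝ} (h : sin θ ≠ 0) :
    HasDerivAt coneProfile
      (-sin θ * log ((1 - cos θ) / (1 + cos θ)) + 2 * cos θ / sin θ) θ := by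
  refine (((hasDerivAt_cos θ).mul
    (hasDerivAt_log_one_sub_cos_div_one_add_cos h)).const_add 2).congr_deriv ?_
  ring

lemma hasDerivAt_deriv_coneProfile {θ : ℝ} (h : sin θ ≠ 0) :
    HasDerivAt (deriv coneProfile)
      (-cos θ * log ((1 - cos θ) / (1 + cos θ)) - 2 - 2 / sin θ ^ 2) θ := by
  have hderiv : deriv coneProfile =ᶠ[nhds θ]
      fun x => -sin x * log ((1 - cos x) / (1 + cos x)) + 2 * cos x / sin x := by
    filter_upwards [continuous_sin.isOpen_preimage _ isOpen_ne |>.mem_nhds h] with x hx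
    exact (hasDerivAt_coneProfile hx).deriv
  have hquot : HasDerivAt (fun x => 2 * cos x / sin x)
      ((2 * -sin θ * sin θ - 2 * cos θ * cos θ) / sin θ ^ 2) θ :=
    ((hasDerivAt_cos θ).const_mul 2).div (hasDerivAt_sin θ) h
  refine ((((hasDerivAt_sin θ).fun_neg.mul
    (hasDerivAt_log_one_sub_cos_div_one_add_cos h)).add hquot).congr_of_eventuallyEq
      hderiv).congr_deriv ?_
  field_simp
  linear_combination (-2 : ℝ) * sin_sq_add_cos_sq θ

lemma coneProfile_ode {θ : ℝ} (h : sin θ ≠ 0) :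
    sin θ * deriv (deriv coneProfile) θ + cos θ * deriv coneProfile θ
      + 2 * sin θ * coneProfile θ = 0 := by
  rw [(hasDerivAt_deriv_coneProfile h).deriv, (hasDerivAt_coneProfile h).deriv, coneProfile]
  field_simp
  linear_combination 2 * sin_sq_add_cos_sq θ

lemma deriv_coneProfile_pi_div_two : deriv coneProfile (π / 2) = 0 := by
  simp [(hasDerivAt_coneProfile (by simp : sin (π / 2) ≠ 0)).deriv]

/-- **The Alt–Caffarelli cone profile ODE.** The function
`f(θ) = 2 + cos θ · log((1 − cos θ)/(1 + cos θ))` is twice differentiable on `(0, π)`,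
satisfies `sin θ · f'' + cos θ · f' + 2 sin θ · f = 0` there, and `f'(π/2) = 0`. -/
theorem stmt_16 (f : ℝ → ℝ)
    (hf : ∀ θ, f θ = 2 + Real.cos θ * Real.log ((1 - Real.cos θ) / (1 + Real.cos θ))) :
    (∀ θ ∈ Set.Ioo (0 : ℝ) Real.pi,
      DifferentiableAt ℝ f θ ∧ DifferentiableAt ℝ (deriv f) θ ∧
      Real.sin θ * deriv (deriv f) θ + Real.cos θ * deriv f θ
        + 2 * Real.sin θ * f θ = 0) ∧
    deriv f (Real.pi / 2) = 0 := by
  obtain rfl : f = coneProfile := funext hf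
  refine ⟨fun θ hθ => ?_, deriv_coneProfile_pi_div_two⟩
  have h : sin θ ≠ 0 := (sin_pos_of_pos_of_lt_pi hθ.1 hθ.2).ne'
  exact ⟨(hasDerivAt_coneProfile h).differentiableAt,
    (hasDerivAt_deriv_coneProfile h).differentiableAt, coneProfile_ode h⟩
end

section
/- Let f : ℝ → ℝ be defined by f(θ) = 2 + cos θ · log((1 − cos θ)/(1 + cos θ)), and define u on ℝ³ (with Euclidean coordinates x = (x₁,x₂,x₃)) by u(x) = ‖x‖ · f( arccos( x₃ / ‖x‖ ) ). Then on the open set O = { x ∈ ℝ³ : x₁² + x₂² > 0 } the function u is twice continuously differentiable and harmonic: Δu(x) = Σ_{i=1}^3 ∂²u/∂x_i²(x) = 0 for every x ∈ O. -/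
noncomputable section

/-- The Laplacian `Δφ = Σᵢ ∂²φ/∂xᵢ²` of a function `φ` on `ℝ³`. -/
def lap (φ : EuclideanSpace ℝ (Fin 3) → ℝ) (x : EuclideanSpace ℝ (Fin 3)) : ℝ :=
  ∑ i : Fin 3, fderiv ℝ (fun y => fderiv ℝ φ y (EuclideanSpace.single i 1)) x
    (EuclideanSpace.single i 1)

namespace AC18

abbrev E3 := EuclideanSpace ℝ (Fin 3)

def pj (i : Fin 3) : E3 →L[ℝ] ℝ := EuclideanSpace.proj i
lemma pj_apply (i : Fin 3) (x : E3) : pj i x = x i := rfl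

lemma hasFDerivAt_coord (i : Fin 3) (x : E3) :
    HasFDerivAt (fun y : E3 => y i) (pj i) x := by
  have h : (fun y : E3 => y i) = ⇑(pj i) := by ext y; rfl
  rw [h]; exact (pj i).hasFDerivAt

lemma contDiff_coord (i : Fin 3) : ContDiff ℝ 2 (fun y : E3 => y i) := by
  have h : (fun y : E3 => y i) = ⇑(pj i) := by ext y; rfl
  rw [h]; exact (pj i).contDiff

def Q3 (x : E3) : ℝ := (x 0)^2 + (x 1)^2 + (x 2)^2
def s3 (x : E3) : ℝ := (x 0)^2 + (x 1)^2
def rr (x : E3) : ℝ := Real.sqrt (Q3 x)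
def aa (x : E3) : ℝ := Real.log (rr x - x 2) - Real.log (rr x + x 2)
def vv (x : E3) : ℝ := 2 * rr x + x 2 * aa x
def c0 (x : E3) : ℝ := 2 * x 0 * rr x * (s3 x)⁻¹
def c1 (x : E3) : ℝ := 2 * x 1 * rr x * (s3 x)⁻¹

def DQ (x : E3) : E3 →L[ℝ] ℝ := (2 * x 0) • pj 0 + (2 * x 1) • pj 1 + (2 * x 2) • pj 2
def Ds (x : E3) : E3 →L[ℝ] ℝ := (2 * x 0) • pj 0 + (2 * x 1) • pj 1
def Dr (x : E3) : E3 →L[ℝ] ℝ := (1 / (2 * rr x)) • DQ x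
def Da (x : E3) : E3 →L[ℝ] ℝ :=
  (rr x - x 2)⁻¹ • (Dr x - pj 2) - (rr x + x 2)⁻¹ • (Dr x + pj 2)
def Dv (x : E3) : E3 →L[ℝ] ℝ := (2 : ℝ) • Dr x + ((x 2) • Da x + (aa x) • pj 2)
def Dc0 (x : E3) : E3 →L[ℝ] ℝ :=
  (2 * x 0 * rr x) • ((-(s3 x ^ 2)⁻¹) • Ds x) +
    (s3 x)⁻¹ • ((2 * x 0) • Dr x + rr x • ((2 : ℝ) • pj 0))
def Dc1 (x : E3) : E3 →L[ℝ] ℝ :=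
  (2 * x 1 * rr x) • ((-(s3 x ^ 2)⁻¹) • Ds x) +
    (s3 x)⁻¹ • ((2 * x 1) • Dr x + rr x • ((2 : ℝ) • pj 1))

lemma hasFDerivAt_sq (i : Fin 3) (x : E3) :
    HasFDerivAt (fun y : E3 => (y i)^2) ((2 * x i) • pj i) x := by
  have := (hasFDerivAt_coord i x).mul (hasFDerivAt_coord i x)
  refine (this.congr_fderiv ?_).congr_of_eventuallyEq ?_
  · ext y; simp [pj_apply]; ring
  · filter_upwards with y; simp only [Pi.mul_apply]; ring

lemma hasFDerivAt_Q3 (x : E3) : HasFDerivAt Q3 (DQ x) x :=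
  ((hasFDerivAt_sq 0 x).add (hasFDerivAt_sq 1 x)).add (hasFDerivAt_sq 2 x)

lemma hasFDerivAt_s3 (x : E3) : HasFDerivAt s3 (Ds x) x :=
  (hasFDerivAt_sq 0 x).add (hasFDerivAt_sq 1 x)

section pos
variable {x : E3} (hx : 0 < s3 x)
include hx

lemma Q3_pos : 0 < Q3 x := by
  have : (x 2)^2 ≥ 0 := sq_nonneg _
  unfold Q3; unfold s3 at hx; linarith

lemma rr_pos : 0 < rr x := Real.sqrt_pos.mpr (Q3_pos hx)

lemma rr_sq : rr x ^ 2 = (x 0)^2 + (x 1)^2 + (x 2)^2 :=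
  Real.sq_sqrt (Q3_pos hx).le

lemma abs_lt_rr : (x 2)^2 < rr x ^ 2 := by
  rw [rr_sq hx]; unfold s3 at hx; linarith

lemma rr_sub_pos : 0 < rr x - x 2 := by
  nlinarith [abs_lt_rr hx, rr_pos hx]

lemma rr_add_pos : 0 < rr x + x 2 := by
  nlinarith [abs_lt_rr hx, rr_pos hx]

lemma hasFDerivAt_rr : HasFDerivAt rr (Dr x) x :=
  (Real.hasDerivAt_sqrt (Q3_pos hx).ne').comp_hasFDerivAt x (hasFDerivAt_Q3 x)

lemma hasFDerivAt_aa : HasFDerivAt aa (Da x) x := by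
  have h1 : HasFDerivAt (fun y : E3 => rr y - y 2) (Dr x - pj 2) x :=
    (hasFDerivAt_rr hx).sub (hasFDerivAt_coord 2 x)
  have h2 : HasFDerivAt (fun y : E3 => rr y + y 2) (Dr x + pj 2) x :=
    (hasFDerivAt_rr hx).add (hasFDerivAt_coord 2 x)
  have l1 := (Real.hasDerivAt_log (rr_sub_pos hx).ne').comp_hasFDerivAt x h1
  have l2 := (Real.hasDerivAt_log (rr_add_pos hx).ne').comp_hasFDerivAt x h2
  exact l1.sub l2

lemma hasFDerivAt_vv : HasFDerivAt vv (Dv x) x := by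
  have h1 : HasFDerivAt (fun y : E3 => 2 * rr y) ((2:ℝ) • Dr x) x :=
    (hasFDerivAt_rr hx).const_mul 2
  have h2 := (hasFDerivAt_coord 2 x).mul (hasFDerivAt_aa hx)
  exact h1.add h2

lemma hasFDerivAt_c0 : HasFDerivAt c0 (Dc0 x) x := by
  have hn : HasFDerivAt (fun y : E3 => 2 * y 0 * rr y)
      ((2 * x 0) • Dr x + rr x • ((2 : ℝ) • pj 0)) x :=
    ((hasFDerivAt_coord 0 x).const_mul 2).mul (hasFDerivAt_rr hx)
  have hi : HasFDerivAt (fun y : E3 => (s3 y)⁻¹) ((-(s3 x ^ 2)⁻¹) • Ds x) x :=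
    (hasDerivAt_inv hx.ne').comp_hasFDerivAt x (hasFDerivAt_s3 x)
  exact hn.mul hi

lemma hasFDerivAt_c1 : HasFDerivAt c1 (Dc1 x) x := by
  have hn : HasFDerivAt (fun y : E3 => 2 * y 1 * rr y)
      ((2 * x 1) • Dr x + rr x • ((2 : ℝ) • pj 1)) x :=
    ((hasFDerivAt_coord 1 x).const_mul 2).mul (hasFDerivAt_rr hx)
  have hi : HasFDerivAt (fun y : E3 => (s3 y)⁻¹) ((-(s3 x ^ 2)⁻¹) • Ds x) x :=
    (hasDerivAt_inv hx.ne').comp_hasFDerivAt x (hasFDerivAt_s3 x)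
  exact hn.mul hi

lemma Dv_e0 : Dv x (EuclideanSpace.single 0 1) = c0 x := by
  have hr := rr_pos hx
  have hm := rr_sub_pos hx
  have hp := rr_add_pos hx
  have hq := rr_sq hx
  have hs : s3 x = (x 0)^2 + (x 1)^2 := rfl
  simp only [Dv, Dr, Da, DQ, c0, ContinuousLinearMap.add_apply, ContinuousLinearMap.sub_apply,
    ContinuousLinearMap.smul_apply, ContinuousLinearMap.coe_smul', Pi.smul_apply,
    pj_apply, EuclideanSpace.single_apply, smul_eq_mul]
  norm_num [show ((1:Fin 3) ≠ 0) from by decide, show ((2:Fin 3) ≠ 0) from by decide]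
  rw [hs]
  have hs' : (0:ℝ) < (x 0)^2 + (x 1)^2 := by rw [← hs]; exact hx
  field_simp
  ring_nf
  linear_combination (-2 * x 0 * rr x ^ 2) * hq

lemma Dv_e1 : Dv x (EuclideanSpace.single 1 1) = c1 x := by
  have hr := rr_pos hx
  have hm := rr_sub_pos hx
  have hp := rr_add_pos hx
  have hq := rr_sq hx
  have hs : s3 x = (x 0)^2 + (x 1)^2 := rfl
  simp only [Dv, Dr, Da, DQ, c1, ContinuousLinearMap.add_apply, ContinuousLinearMap.sub_apply,
    ContinuousLinearMap.smul_apply, ContinuousLinearMap.coe_smul', Pi.smul_apply,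
    pj_apply, EuclideanSpace.single_apply, smul_eq_mul]
  norm_num [show ((0:Fin 3) ≠ 1) from by decide, show ((2:Fin 3) ≠ 1) from by decide]
  rw [hs]
  have hs' : (0:ℝ) < (x 0)^2 + (x 1)^2 := by rw [← hs]; exact hx
  field_simp
  ring_nf
  linear_combination (-2 * x 1 * rr x ^ 2) * hq

lemma Dv_e2 : Dv x (EuclideanSpace.single 2 1) = aa x := by
  have hr := rr_pos hx
  have hm := rr_sub_pos hx
  have hp := rr_add_pos hx
  simp only [Dv, Dr, Da, DQ, ContinuousLinearMap.add_apply, ContinuousLinearMap.sub_apply,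
    ContinuousLinearMap.smul_apply, ContinuousLinearMap.coe_smul', Pi.smul_apply,
    pj_apply, EuclideanSpace.single_apply, smul_eq_mul]
  norm_num [show ((0:Fin 3) ≠ 2) from by decide, show ((1:Fin 3) ≠ 2) from by decide]
  field_simp
  ring

lemma lap_sum_zero :
    Dc0 x (EuclideanSpace.single 0 1) + Dc1 x (EuclideanSpace.single 1 1)
      + Da x (EuclideanSpace.single 2 1) = 0 := by
  have hr := rr_pos hx
  have hm := rr_sub_pos hx
  have hp := rr_add_pos hx
  have hq := rr_sq hx
  have hs : s3 x = (x 0)^2 + (x 1)^2 := rfl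
  have hs' : (0:ℝ) < (x 0)^2 + (x 1)^2 := by rw [← hs]; exact hx
  simp only [Dc0, Dc1, Da, Dr, DQ, Ds, ContinuousLinearMap.add_apply,
    ContinuousLinearMap.sub_apply, ContinuousLinearMap.smul_apply,
    ContinuousLinearMap.coe_smul', Pi.smul_apply,
    pj_apply, EuclideanSpace.single_apply, smul_eq_mul]
  norm_num [show ((0:Fin 3) ≠ 1) from by decide, show ((0:Fin 3) ≠ 2) from by decide,
    show ((1:Fin 3) ≠ 0) from by decide, show ((1:Fin 3) ≠ 2) from by decide,
    show ((2:Fin 3) ≠ 0) from by decide, show ((2:Fin 3) ≠ 1) from by decide]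
  rw [hs]
  field_simp
  ring_nf

end pos
end AC18

end

noncomputable section

open AC18 in
/-- **Harmonicity of the Alt–Caffarelli cone function.** With
`f(θ) = 2 + cos θ · log((1 − cos θ)/(1 + cos θ))`, the function
`u(x) = ‖x‖ f(arccos(x₃/‖x‖))` is `C²` and harmonic on the complement of the `x₃`-axis. -/
theorem stmt_18 (f : ℝ → ℝ)
    (hf : ∀ θ, f θ = 2 + Real.cos θ * Real.log ((1 - Real.cos θ) / (1 + Real.cos θ)))
    (u : EuclideanSpace ℝ (Fin 3) → ℝ)
    (hu : ∀ x, u x = ‖x‖ * f (Real.arccos (x 2 / ‖x‖)))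
    (O : Set (EuclideanSpace ℝ (Fin 3)))
    (hO : O = {x : EuclideanSpace ℝ (Fin 3) | 0 < (x 0) ^ 2 + (x 1) ^ 2}) :
    ContDiffOn ℝ 2 u O ∧ ∀ x ∈ O, lap u x = 0 := by
  -- O is open
  have hmem : ∀ {x : E3}, x ∈ O → 0 < s3 x := by
    intro x hx; rw [hO] at hx; exact hx
  have hs3cont : Continuous s3 := by
    have : Continuous fun y : E3 => y 0 := (pj 0).continuous
    have h1 : Continuous fun y : E3 => y 1 := (pj 1).continuous
    exact ((this.pow 2).add (h1.pow 2))
  have hOopen : IsOpen O := by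
    rw [hO]
    exact isOpen_lt continuous_const hs3cont
  -- u = vv on O
  have hnorm : ∀ x : E3, ‖x‖ = rr x := by
    intro x
    rw [EuclideanSpace.norm_eq]
    simp [Fin.sum_univ_three, Real.norm_eq_abs, sq_abs, rr, Q3]
  have hueqv : ∀ x ∈ O, u x = vv x := by
    intro x hxO
    have hx := hmem hxO
    have hr := rr_pos hx
    have hm := rr_sub_pos hx
    have hp := rr_add_pos hx
    rw [hu, hf, hnorm]
    have h1 : -1 ≤ x 2 / rr x := by
      rw [le_div_iff₀ hr]; linarith
    have h2 : x 2 / rr x ≤ 1 := by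
      rw [div_le_one hr]; linarith
    rw [Real.cos_arccos h1 h2]
    have hpos1 : (0:ℝ) < 1 + x 2 / rr x := by
      have : -1 < x 2 / rr x := by rw [lt_div_iff₀ hr]; linarith
      linarith
    have h3 : (1 - x 2 / rr x) / (1 + x 2 / rr x) = (rr x - x 2) / (rr x + x 2) := by
      rw [div_eq_div_iff hpos1.ne' hp.ne']
      field_simp
    rw [h3, Real.log_div hm.ne' hp.ne', vv, aa]
    field_simp
  have huv : ∀ x ∈ O, u =ᶠ[nhds x] vv := fun x hxO =>
    Filter.eventuallyEq_of_mem (hOopen.mem_nhds hxO) hueqv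
  constructor
  · -- C² regularity
    refine ContDiffOn.congr ?_ hueqv
    intro x hxO
    have hx := hmem hxO
    have cQ : ContDiffAt ℝ 2 Q3 x :=
      ((((contDiff_coord 0).pow 2).add ((contDiff_coord 1).pow 2)).add
        ((contDiff_coord 2).pow 2)).contDiffAt
    have crr : ContDiffAt ℝ 2 rr x :=
      (Real.contDiffAt_sqrt (Q3_pos hx).ne').comp x cQ
    have c2 : ContDiffAt ℝ 2 (fun y : E3 => y 2) x := (contDiff_coord 2).contDiffAt
    have caa : ContDiffAt ℝ 2 aa x := by
      have l1 : ContDiffAt ℝ 2 (fun y : E3 => Real.log (rr y - y 2)) x :=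
        (crr.sub c2).log (rr_sub_pos hx).ne'
      have l2 : ContDiffAt ℝ 2 (fun y : E3 => Real.log (rr y + y 2)) x :=
        (crr.add c2).log (rr_add_pos hx).ne'
      exact l1.sub l2
    have cvv : ContDiffAt ℝ 2 vv x :=
      (contDiffAt_const.mul crr).add (c2.mul caa)
    exact cvv.contDiffWithinAt
  · -- harmonicity
    intro x hxO
    have hx := hmem hxO
    -- first derivatives agree with c0, c1, aa near x
    have hfd : ∀ y ∈ O, fderiv ℝ u y = Dv y := by
      intro y hyO
      rw [(huv y hyO).fderiv_eq, (hasFDerivAt_vv (hmem hyO)).fderiv]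
    have h0 : (fun y => fderiv ℝ u y (EuclideanSpace.single 0 1)) =ᶠ[nhds x] c0 := by
      filter_upwards [hOopen.mem_nhds hxO] with y hy
      rw [hfd y hy, Dv_e0 (hmem hy)]
    have h1 : (fun y => fderiv ℝ u y (EuclideanSpace.single 1 1)) =ᶠ[nhds x] c1 := by
      filter_upwards [hOopen.mem_nhds hxO] with y hy
      rw [hfd y hy, Dv_e1 (hmem hy)]
    have h2 : (fun y => fderiv ℝ u y (EuclideanSpace.single 2 1)) =ᶠ[nhds x] aa := by
      filter_upwards [hOopen.mem_nhds hxO] with y hy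
      rw [hfd y hy, Dv_e2 (hmem hy)]
    unfold lap
    rw [Fin.sum_univ_three, h0.fderiv_eq, h1.fderiv_eq, h2.fderiv_eq,
      (hasFDerivAt_c0 hx).fderiv, (hasFDerivAt_c1 hx).fderiv, (hasFDerivAt_aa hx).fderiv]
    exact lap_sum_zero hx
end
end
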